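/- arXiv:2401.08544 — 2 statements merged into one kernel-verified Lean document; each statement's English description precedes it below -/
import Mathlib

section
/- Let Ω ⊆ ℝ^d be measurable and let {Ψ_I}_{I∈S} be a partition of unity on Ω with bound C_∞ and overlap M. Let u : ℝ^d → ℝ and, for each I ∈ S, let w_I : ℝ^d → ℝ be measurable functions and ε_I ≥ 0 be such that (∫_{Ω ∩ {x : Ψ_I(x) ≠ 0}} (w_I(x) − u(x))² dx)^{1/2} ≤ ε_I. Then the patched approximation u^h = Σ_{I∈S} Ψ_I w_I satisfies (∫_Ω (u^h(x) − u(x))² dx)^{1/2} ≤ C_∞ · √M · (Σ_{I∈S} ε_I²)^{1/2}. -/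
open MeasureTheory

/-- Global error bound for a partition-of-unity patched approximation:
if each local approximation `w I` has local `L²` error at most `ε I` on
`Ω ∩ supp Ψ I`, then `u^h = ∑ Ψ I * w I` has global `L²` error at most
`Cinf · √M · (∑ ε I ²)^{1/2}`. -/
theorem stmt_0 {d : ℕ} {ι : Type*} (S : Finset ι)
    (Ω : Set (EuclideanSpace ℝ (Fin d))) (hΩ : MeasurableSet Ω)
    (Ψ : ι → EuclideanSpace ℝ (Fin d) → ℝ) (Cinf : ℝ) (M : ℕ)
    (hΨmeas : ∀ I ∈ S, Measurable (Ψ I))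
    (hPU : ∀ x ∈ Ω, ∑ I ∈ S, Ψ I x = 1)
    (hbound : ∀ I ∈ S, ∀ x, |Ψ I x| ≤ Cinf)
    (hoverlap : ∀ x ∈ Ω, ({I | I ∈ S ∧ Ψ I x ≠ 0}).ncard ≤ M)
    (u : EuclideanSpace ℝ (Fin d) → ℝ) (hu : Measurable u)
    (w : ι → EuclideanSpace ℝ (Fin d) → ℝ) (hw : ∀ I ∈ S, Measurable (w I))
    (ε : ι → ℝ) (hε : ∀ I ∈ S, 0 ≤ ε I)
    (hint : ∀ I ∈ S, IntegrableOn (fun x => (w I x - u x) ^ 2) (Ω ∩ {x | Ψ I x ≠ 0}))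
    (hloc : ∀ I ∈ S,
      Real.sqrt (∫ x in Ω ∩ {x | Ψ I x ≠ 0}, (w I x - u x) ^ 2) ≤ ε I) :
    Real.sqrt (∫ x in Ω, ((∑ I ∈ S, Ψ I x * w I x) - u x) ^ 2) ≤
      Cinf * Real.sqrt M * Real.sqrt (∑ I ∈ S, (ε I) ^ 2) := by
  classical
  -- case S empty
  rcases S.eq_empty_or_nonempty with rfl | ⟨I₀, hI₀⟩
  · have hΩe : Ω = ∅ := by
      ext x; simp only [Set.mem_empty_iff_false, iff_false]
      intro hx
      have := hPU x hx
      simp at this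
    simp [hΩe]
  have hC : 0 ≤ Cinf := le_trans (abs_nonneg _) (hbound I₀ hI₀ 0)
  set A : ι → Set (EuclideanSpace ℝ (Fin d)) := fun I => Ω ∩ {x | Ψ I x ≠ 0} with hA
  have hAmeas : ∀ I ∈ S, MeasurableSet (A I) := fun I hI =>
    hΩ.inter ((hΨmeas I hI) (measurableSet_singleton 0)).compl
  set g : EuclideanSpace ℝ (Fin d) → ℝ :=
    fun x => (M : ℝ) * Cinf ^ 2 * ∑ I ∈ S, (A I).indicator (fun y => (w I y - u y) ^ 2) x with hg
  -- pointwise bound on Ω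
  have hpt : ∀ x ∈ Ω, ((∑ I ∈ S, Ψ I x * w I x) - u x) ^ 2 ≤ g x := by
    intro x hx
    have h1 : (∑ I ∈ S, Ψ I x * w I x) - u x = ∑ I ∈ S, Ψ I x * (w I x - u x) := by
      rw [Finset.sum_congr rfl (fun I _ => mul_sub (Ψ I x) (w I x) (u x)),
        Finset.sum_sub_distrib, ← Finset.sum_mul, hPU x hx, one_mul]
    rw [h1]
    set T : Finset ι := S.filter (fun I => Ψ I x ≠ 0) with hT
    have h2 : ∑ I ∈ S, Ψ I x * (w I x - u x) = ∑ I ∈ T, Ψ I x * (w I x - u x) := by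
      rw [hT, Finset.sum_filter_of_ne]
      intro I _ h
      intro h0
      apply h
      rw [h0, zero_mul]
    rw [h2]
    calc (∑ I ∈ T, Ψ I x * (w I x - u x)) ^ 2
        ≤ T.card * ∑ I ∈ T, (Ψ I x * (w I x - u x)) ^ 2 := sq_sum_le_card_mul_sum_sq
      _ ≤ (M : ℝ) * ∑ I ∈ T, (Ψ I x * (w I x - u x)) ^ 2 := by
          apply mul_le_mul_of_nonneg_right _ (Finset.sum_nonneg fun _ _ => sq_nonneg _)
          have hset : (T : Set ι) = {I | I ∈ S ∧ Ψ I x ≠ 0} := by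
            ext I; simp [hT]
          have hcard : T.card ≤ M := by
            have h := hoverlap x hx
            rw [← hset, Set.ncard_coe_finset] at h
            exact h
          exact_mod_cast hcard
      _ ≤ (M : ℝ) * ∑ I ∈ T, Cinf ^ 2 * ((w I x - u x) ^ 2) := by
          apply mul_le_mul_of_nonneg_left _ (Nat.cast_nonneg M)
          apply Finset.sum_le_sum
          intro I hI
          rw [mul_pow]
          apply mul_le_mul_of_nonneg_right _ (sq_nonneg _)
          calc (Ψ I x) ^ 2 = |Ψ I x| ^ 2 := (sq_abs _).symm
            _ ≤ Cinf ^ 2 := by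
                exact pow_le_pow_left₀ (abs_nonneg _) (hbound I (Finset.mem_filter.mp hI).1 x) 2
      _ ≤ g x := by
          rw [hg]
          simp only
          rw [mul_assoc]
          apply mul_le_mul_of_nonneg_left _ (Nat.cast_nonneg M)
          rw [← Finset.mul_sum]
          apply mul_le_mul_of_nonneg_left _ (sq_nonneg _)
          have : ∀ I ∈ T, (w I x - u x) ^ 2 = (A I).indicator (fun y => (w I y - u y) ^ 2) x := by
            intro I hI
            rw [Set.indicator_of_mem (Set.mem_inter hx (Finset.mem_filter.mp hI).2)]
          rw [Finset.sum_congr rfl this]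
          apply Finset.sum_le_sum_of_subset_of_nonneg (Finset.filter_subset _ _)
          intro I _ _
          exact Set.indicator_nonneg (fun y _ => sq_nonneg _) x
  -- g integrable
  have hgint : IntegrableOn g Ω := by
    apply Integrable.const_mul
    apply integrable_finset_sum
    intro I hI
    exact ((hint I hI).integrable_indicator (hAmeas I hI)).integrableOn
  -- f integrable on Ω
  have hfmeas : Measurable fun x => ((∑ I ∈ S, Ψ I x * w I x) - u x) ^ 2 := by
    apply Measurable.pow_const
    apply Measurable.sub _ hu
    exact Finset.measurable_sum S fun I hI => (hΨmeas I hI).mul (hw I hI)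
  have hfint : IntegrableOn (fun x => ((∑ I ∈ S, Ψ I x * w I x) - u x) ^ 2) Ω := by
    apply Integrable.mono' hgint hfmeas.aestronglyMeasurable
    rw [ae_restrict_iff' hΩ]
    exact ae_of_all _ fun x hx => by
      rw [Real.norm_eq_abs, abs_of_nonneg (sq_nonneg _)]; exact hpt x hx
  -- integral bound
  have hIg : ∫ x in Ω, g x = (M : ℝ) * Cinf ^ 2 * ∑ I ∈ S, ∫ x in A I, (w I x - u x) ^ 2 := by
    rw [integral_const_mul]
    congr 1
    rw [integral_finset_sum]
    · apply Finset.sum_congr rfl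
      intro I hI
      rw [setIntegral_indicator (hAmeas I hI)]
      congr 1
      simp only [hA]
      rw [← Set.inter_assoc, Set.inter_self]
    · intro I hI
      exact ((hint I hI).integrable_indicator (hAmeas I hI)).integrableOn
  have hsum : ∑ I ∈ S, ∫ x in A I, (w I x - u x) ^ 2 ≤ ∑ I ∈ S, (ε I) ^ 2 := by
    apply Finset.sum_le_sum
    intro I hI
    have hnn : 0 ≤ ∫ x in A I, (w I x - u x) ^ 2 :=
      integral_nonneg fun x => sq_nonneg _
    calc ∫ x in A I, (w I x - u x) ^ 2
        = (Real.sqrt (∫ x in A I, (w I x - u x) ^ 2)) ^ 2 := (Real.sq_sqrt hnn).symm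
      _ ≤ (ε I) ^ 2 := pow_le_pow_left₀ (Real.sqrt_nonneg _) (hloc I hI) 2
  have hmain : ∫ x in Ω, ((∑ I ∈ S, Ψ I x * w I x) - u x) ^ 2 ≤
      (M : ℝ) * Cinf ^ 2 * ∑ I ∈ S, (ε I) ^ 2 := by
    calc ∫ x in Ω, ((∑ I ∈ S, Ψ I x * w I x) - u x) ^ 2
        ≤ ∫ x in Ω, g x := setIntegral_mono_on hfint hgint hΩ hpt
      _ = (M : ℝ) * Cinf ^ 2 * ∑ I ∈ S, ∫ x in A I, (w I x - u x) ^ 2 := hIg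
      _ ≤ (M : ℝ) * Cinf ^ 2 * ∑ I ∈ S, (ε I) ^ 2 := by
          apply mul_le_mul_of_nonneg_left hsum (by positivity)
  calc Real.sqrt (∫ x in Ω, ((∑ I ∈ S, Ψ I x * w I x) - u x) ^ 2)
      ≤ Real.sqrt ((M : ℝ) * Cinf ^ 2 * ∑ I ∈ S, (ε I) ^ 2) := Real.sqrt_le_sqrt hmain
    _ = Cinf * Real.sqrt M * Real.sqrt (∑ I ∈ S, (ε I) ^ 2) := by
        rw [Real.sqrt_mul (by positivity), Real.sqrt_mul (Nat.cast_nonneg M),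
          Real.sqrt_sq hC]
        ring
end

section
/- Let p ∈ ℕ, x̄ ∈ ℝ, h > 0, and let u : ℝ → ℝ be (p+2)-times continuously differentiable on [x̄ − h, x̄ + h]. Let T_p u denote the degree-p Taylor polynomial of u at x̄, let F : ℝ → ℝ be measurable with ∫_{x̄−h}^{x̄+h} F² < ∞, and set M_{p+2} = sup_{x ∈ [x̄−h, x̄+h]} |u^{(p+2)}(x)|. Then (∫_{x̄−h}^{x̄+h} (T_p u(x) + F(x) − u(x))² dx)^{1/2} ≤ (∫_{x̄−h}^{x̄+h} (F(x) − ((x − x̄)^{p+1}/(p+1)!)·u^{(p+1)}(x̄))² dx)^{1/2} + √(2h) · (h^{p+2}/(p+2)!) · M_{p+2}. -/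
/-!
Write `T_p u + F - u = (F - c (x - x̄)^{p+1}) + (T_{p+1} u - u)`, where `c (x - x̄)^{p+1}` is the
degree-`p+1` Taylor term. Minkowski's inequality in `L²` separates the two summands. The second is
the Taylor remainder of order `p+1`, bounded pointwise by `h^{p+2} M_{p+2} / (p+2)!` via the
Lagrange form, so its `L²` norm over an interval of length `2h` is at most `√(2h)` times that.
-/

open MeasureTheory Set Nat

section L2

variable {α : Type*} [MeasurableSpace α] {μ : Measure α}

theorem sqrt_integral_sq_eq_norm_toLp {f : α → ℝ} (hf : MemLp f 2 μ) :
    √(∫ a, f a ^ 2 ∂μ) = ‖hf.toLp f‖ := by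
  rw [← Real.sqrt_sq (norm_nonneg _), ← real_inner_self_eq_norm_sq, L2.inner_def]
  congr 1
  refine integral_congr_ae (hf.coeFn_toLp.mono fun a ha => ?_)
  simp [ha, sq]

theorem sqrt_integral_add_sq_le {f g : α → ℝ} (hf : MemLp f 2 μ) (hg : MemLp g 2 μ) :
    √(∫ a, (f a + g a) ^ 2 ∂μ) ≤ √(∫ a, f a ^ 2 ∂μ) + √(∫ a, g a ^ 2 ∂μ) := by
  calc √(∫ a, (f a + g a) ^ 2 ∂μ) = ‖(hf.add hg).toLp (f + g)‖ :=
        sqrt_integral_sq_eq_norm_toLp (hf.add hg)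
    _ ≤ ‖hf.toLp f‖ + ‖hg.toLp g‖ := by rw [MemLp.toLp_add]; exact norm_add_le _ _
    _ = _ := by rw [sqrt_integral_sq_eq_norm_toLp hf, sqrt_integral_sq_eq_norm_toLp hg]

theorem sqrt_setIntegral_sq_le {f : α → ℝ} {s : Set α} {B : ℝ} (hs : μ s < ⊤)
    (hf : ∀ x ∈ s, |f x| ≤ B) :
    √(∫ x in s, f x ^ 2 ∂μ) ≤ √(μ.real s) * B := by
  obtain rfl | ⟨x₀, hx₀⟩ := s.eq_empty_or_nonempty
  · simp
  have hB : 0 ≤ B := (abs_nonneg _).trans (hf x₀ hx₀)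
  have hsq : ∀ x ∈ s, ‖f x ^ 2‖ ≤ B ^ 2 := fun x hx => by
    simpa [Real.norm_eq_abs, sq_abs] using pow_le_pow_left₀ (abs_nonneg _) (hf x hx) 2
  calc √(∫ x in s, f x ^ 2 ∂μ) ≤ √(B ^ 2 * μ.real s) :=
        Real.sqrt_le_sqrt ((le_abs_self _).trans (norm_setIntegral_le_of_norm_le_const hs hsq))
    _ = √(μ.real s) * B := by
        rw [Real.sqrt_mul' _ measureReal_nonneg, Real.sqrt_sq hB, mul_comm]

end L2

theorem ContinuousOn.memLp_two_restrict {X : Type*} [TopologicalSpace X] [MeasurableSpace X]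
    [OpensMeasurableSpace X] {μ : Measure X} [IsFiniteMeasureOnCompacts μ] {f : X → ℝ}
    {s : Set X} (hs : IsCompact s) (hs' : MeasurableSet s) (hf : ContinuousOn f s) :
    MemLp f 2 (μ.restrict s) :=
  (memLp_two_iff_integrable_sq (hf.aestronglyMeasurable hs')).2
    ((hf.pow 2).integrableOn_compact' hs hs')

theorem iteratedDerivWithin_subset {f : ℝ → ℝ} {s t : Set ℝ} {n : ℕ} {x : ℝ} (st : s ⊆ t)
    (hs : UniqueDiffOn ℝ s) (ht : UniqueDiffOn ℝ t) (hf : ContDiffOn ℝ n f t) (hx : x ∈ s) :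
    iteratedDerivWithin n f s x = iteratedDerivWithin n f t x := by
  simp only [iteratedDerivWithin_eq_iteratedFDerivWithin,
    iteratedFDerivWithin_subset st hs ht hf hx]

theorem taylorWithinEval_subset {f : ℝ → ℝ} {s t : Set ℝ} {n : ℕ} {x₀ : ℝ} (st : s ⊆ t)
    (hs : UniqueDiffOn ℝ s) (ht : UniqueDiffOn ℝ t) (hf : ContDiffOn ℝ n f t) (hx₀ : x₀ ∈ s)
    (x : ℝ) : taylorWithinEval f n s x₀ x = taylorWithinEval f n t x₀ x := by
  simp only [taylor_within_apply]
  refine Finset.sum_congr rfl fun k hk => ?_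
  have hkn : (k : WithTop ℕ∞) ≤ n := by
    exact_mod_cast Nat.lt_succ_iff.1 (Finset.mem_range.1 hk)
  rw [iteratedDerivWithin_subset st hs ht (hf.of_le hkn) hx₀]

/-- Unlike `taylor_mean_remainder_bound`, the expansion point is arbitrary and the constant is the
sharp `(n + 1)!`. -/
theorem abs_sub_taylorWithinEval_le {f : ℝ → ℝ} {a b C x₀ x : ℝ} {n : ℕ}
    (hf : ContDiffOn ℝ (n + 1 : ℕ) f (Icc a b)) (hx₀ : x₀ ∈ Icc a b) (hx : x ∈ Icc a b)
    (hC : ∀ y ∈ Icc a b, |iteratedDerivWithin (n + 1) f (Icc a b) y| ≤ C) :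
    |f x - taylorWithinEval f n (Icc a b) x₀ x| ≤ C * |x - x₀| ^ (n + 1) / (n + 1)! := by
  rcases eq_or_ne x₀ x with rfl | hne
  · simp [taylorWithinEval_self]
  have hab : a < b := by
    by_contra! hba
    exact hne (le_antisymm (hx₀.2.trans (hba.trans hx.1)) (hx.2.trans (hba.trans hx₀.1)))
  have hsub : uIcc x₀ x ⊆ Icc a b := uIcc_subset_Icc hx₀ hx
  have hI : UniqueDiffOn ℝ (uIcc x₀ x) := uniqueDiffOn_uIcc hne
  have hJ : UniqueDiffOn ℝ (Icc a b) := uniqueDiffOn_Icc hab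
  have hf' : DifferentiableOn ℝ (iteratedDerivWithin n f (uIcc x₀ x)) (uIoo x₀ x) :=
    ((hf.mono hsub).differentiableOn_iteratedDerivWithin (by exact_mod_cast n.lt_succ_self)
      hI).mono Ioo_subset_Icc_self
  -- The Lagrange form differentiates within `uIcc x₀ x`; there these derivatives agree with those
  -- within `Icc a b`.
  obtain ⟨y, hy, hrem⟩ := taylor_mean_remainder_lagrange hne ((hf.mono hsub).of_succ) hf'
  have hyI : y ∈ uIcc x₀ x := Ioo_subset_Icc_self hy
  rw [taylorWithinEval_subset hsub hI hJ hf.of_succ left_mem_uIcc,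
    iteratedDerivWithin_subset hsub hI hJ hf hyI] at hrem
  rw [hrem, abs_div, abs_mul, abs_pow, abs_of_pos (by positivity : (0 : ℝ) < (n + 1)!)]
  gcongr
  exact hC y (hsub hyI)

theorem sum_taylor_add_sub_eq (f : ℝ → ℝ) (n : ℕ) (s : Set ℝ) (x₀ x c : ℝ) :
    (∑ k ∈ Finset.range (n + 1), iteratedDerivWithin k f s x₀ * (x - x₀) ^ k / (k ! : ℝ)) +
        c - f x =
      (c - (x - x₀) ^ (n + 1) / ((n + 1)! : ℝ) * iteratedDerivWithin (n + 1) f s x₀) +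
        (taylorWithinEval f (n + 1) s x₀ x - f x) := by
  have hterm : ∀ k, iteratedDerivWithin k f s x₀ * (x - x₀) ^ k / (k ! : ℝ) =
      ((k ! : ℝ)⁻¹ * (x - x₀) ^ k) • iteratedDerivWithin k f s x₀ := fun k => by
    rw [smul_eq_mul]; ring
  simp only [hterm, taylorWithinEval_succ, taylor_within_apply, smul_eq_mul, Nat.factorial_succ,
    Nat.cast_mul, Nat.cast_succ]
  ring

theorem abs_taylorWithinEval_sub_le_of_mem_Icc {u : ℝ → ℝ} {n : ℕ} {x₀ r x : ℝ} (hr : 0 < r)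
    (hu : ContDiffOn ℝ (n + 1 : ℕ) u (Icc (x₀ - r) (x₀ + r))) (hx : x ∈ Icc (x₀ - r) (x₀ + r)) :
    |taylorWithinEval u n (Icc (x₀ - r) (x₀ + r)) x₀ x - u x| ≤
      r ^ (n + 1) / ((n + 1)! : ℝ) *
        sSup ((fun y => |iteratedDerivWithin (n + 1) u (Icc (x₀ - r) (x₀ + r)) y|) ''
          Icc (x₀ - r) (x₀ + r)) := by
  set I := Icc (x₀ - r) (x₀ + r)
  set M := sSup ((fun y => |iteratedDerivWithin (n + 1) u I y|) '' I)
  have hx₀ : x₀ ∈ I := ⟨by linarith, by linarith⟩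
  have hMle : ∀ y ∈ I, |iteratedDerivWithin (n + 1) u I y| ≤ M := fun y hy =>
    (hu.continuousOn_iteratedDerivWithin le_rfl
      (uniqueDiffOn_Icc (by linarith))).abs.le_sSup_image_Icc hy
  have hM : 0 ≤ M := (abs_nonneg _).trans (hMle x₀ hx₀)
  have hdist : |x - x₀| ≤ r := abs_sub_le_iff.2 ⟨by linarith [hx.2], by linarith [hx.1]⟩
  calc |taylorWithinEval u n I x₀ x - u x| = |u x - taylorWithinEval u n I x₀ x| :=
        abs_sub_comm _ _
    _ ≤ M * |x - x₀| ^ (n + 1) / (n + 1)! := abs_sub_taylorWithinEval_le hu hx₀ hx hMle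
    _ ≤ M * r ^ (n + 1) / (n + 1)! := by gcongr
    _ = r ^ (n + 1) / ((n + 1)! : ℝ) * M := by ring

theorem memLp_two_taylorWithinEval_sub {u : ℝ → ℝ} {n : ℕ} {s : Set ℝ} {x₀ a b : ℝ}
    (hu : ContinuousOn u (Icc a b)) :
    MemLp (fun x => taylorWithinEval u n s x₀ x - u x) 2 (volume.restrict (Icc a b)) := by
  refine ContinuousOn.memLp_two_restrict isCompact_Icc measurableSet_Icc ?_
  refine ContinuousOn.sub (Continuous.continuousOn ?_) hu
  rw [funext (taylor_within_apply u n s x₀)]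
  fun_prop

/-- Local error decomposition for a degree-`p` Taylor background plus an
enrichment `F`: the `L²` distance of `T_p u + F` from `u` on `[xbar−h, xbar+h]` is bounded by
the `L²` distance of `F` from the leading Taylor remainder term
`((x−xbar)^{p+1}/(p+1)!)·u^{(p+1)}(xbar)` plus `√(2h)·(h^{p+2}/(p+2)!)·M_{p+2}`, with
`M_{p+2}` the sup of `|u^{(p+2)}|` on the interval. -/
theorem stmt_4 (p : ℕ) (xbar h : ℝ) (hh : 0 < h) (u : ℝ → ℝ)
    (hu : ContDiffOn ℝ (p + 2 : ℕ) u (Set.Icc (xbar - h) (xbar + h)))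
    (F : ℝ → ℝ) (hFmeas : Measurable F)
    (hFint : IntegrableOn (fun x => (F x) ^ 2) (Set.Icc (xbar - h) (xbar + h))) :
    Real.sqrt (∫ x in Set.Icc (xbar - h) (xbar + h),
        ((∑ k ∈ Finset.range (p + 1),
            iteratedDerivWithin k u (Set.Icc (xbar - h) (xbar + h)) xbar *
              (x - xbar) ^ k / (k.factorial : ℝ)) + F x - u x) ^ 2) ≤
      Real.sqrt (∫ x in Set.Icc (xbar - h) (xbar + h),
          (F x - (x - xbar) ^ (p + 1) / ((p + 1).factorial : ℝ) *
            iteratedDerivWithin (p + 1) u (Set.Icc (xbar - h) (xbar + h)) xbar) ^ 2) +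
        Real.sqrt (2 * h) * (h ^ (p + 2) / ((p + 2).factorial : ℝ)) *
          sSup ((fun x => |iteratedDerivWithin (p + 2) u (Set.Icc (xbar - h) (xbar + h)) x|) ''
            Set.Icc (xbar - h) (xbar + h)) := by
  set s := Icc (xbar - h) (xbar + h)
  have hF : MemLp F 2 (volume.restrict s) :=
    (memLp_two_iff_integrable_sq hFmeas.aestronglyMeasurable).2 hFint
  have hlead : MemLp (fun x => (x - xbar) ^ (p + 1) / ((p + 1)! : ℝ) *
      iteratedDerivWithin (p + 1) u s xbar) 2 (volume.restrict s) :=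
    (Continuous.continuousOn (by fun_prop)).memLp_two_restrict isCompact_Icc measurableSet_Icc
  simp only [sum_taylor_add_sub_eq]
  calc _ ≤ √(∫ x in s, (F x - (x - xbar) ^ (p + 1) / ((p + 1)! : ℝ) *
          iteratedDerivWithin (p + 1) u s xbar) ^ 2) +
        √(∫ x in s, (taylorWithinEval u (p + 1) s xbar x - u x) ^ 2) :=
        sqrt_integral_add_sq_le (hF.sub hlead) (memLp_two_taylorWithinEval_sub hu.continuousOn)
    _ ≤ _ + √(volume.real s) * (h ^ (p + 2) / ((p + 2)! : ℝ) *
          sSup ((fun x => |iteratedDerivWithin (p + 2) u s x|) '' s)) := by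
        gcongr
        exact sqrt_setIntegral_sq_le measure_Icc_lt_top fun x hx =>
          abs_taylorWithinEval_sub_le_of_mem_Icc hh hu hx
    _ = _ := by
        rw [Real.volume_real_Icc_of_le (by linarith), show xbar + h - (xbar - h) = 2 * h by ring]
        ring
end
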